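/- The subspace spanned by e_1=α_{11}^1, e_2=α_{12}^1, e_3=α_{21}^1, e_4=α_{22}^1, e_6=α_{12}^2, e_7=α_{21}^2, e_8=α_{22}^2 is closed under the multiplication of W(2), i.e., it is a proper subalgebra of W(2) of codimension 1. -/

import Mathlib

/-!
The span of the seven basis vectors is the kernel of the coordinate functional
`φ = alphaCoeff 0 0 1`, the coefficient of `α_{11}^2`. Expanding the product on the basis gives a
Leibniz-type rule `φ(A·B) = φ(A) λ(B) + μ(A) φ(B)` for suitable linear forms `λ, μ`, so the kernel
of `φ` is closed under the product; as the kernel of a nonzero linear form on the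
8-dimensional space `W(2)` it has dimension 7.
-/

set_option maxSynthPendingDepth 3
set_option synthInstance.maxHeartbeats 1000000
set_option maxHeartbeats 1000000

section

variable (K : Type*) [Field K] [CharZero K]

/-- The 2-dimensional space `E₂`. -/
abbrev V2 := Fin 2 → K

/-- The basis `e 0, e 1` of `E₂`. -/
noncomputable def e (i : Fin 2) : V2 K := Pi.single i 1

/-- `W(2)`: the space of all bilinear maps on `E₂`. -/
abbrev W := V2 K →ₗ[K] V2 K →ₗ[K] V2 K

/-- The basis elements `α_{ij}^k` of `W(2)`, `alpha i j k (e t) (e l) = δ_{it} δ_{jl} • e k`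
(indices shifted to `0,1`). -/
noncomputable def alpha (i j k : Fin 2) : W K :=
  LinearMap.mk₂ K (fun x y => (x i * y j) • e K k)
    (fun x x' y => by simp [add_mul, add_smul])
    (fun c x y => by simp [smul_smul, mul_assoc])
    (fun x y y' => by simp [mul_add, add_smul])
    (fun c x y => by simp [smul_smul]; ring_nf)

/-- The multiplication of the conservative algebra `W(2)`:
`(A·B)(x,y) = A(e₁, B(x,y)) − B(A(e₁,x), y) − B(x, A(e₁,y))`. -/
noncomputable def mulW (A B : W K) : W K :=
  LinearMap.mk₂ K
    (fun x y => A (e K 0) (B x y) - B (A (e K 0) x) y - B x (A (e K 0) y))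
    (fun x x' y => by simp only [map_add, LinearMap.add_apply]; abel)
    (fun c x y => by simp only [map_smul, LinearMap.smul_apply, smul_sub])
    (fun x y y' => by simp only [map_add, LinearMap.add_apply]; abel)
    (fun c x y => by simp only [map_smul, LinearMap.smul_apply, smul_sub])

end

section

variable {K : Type*} [Field K]

lemma e_apply (i j : Fin 2) : e K i j = if j = i then 1 else 0 := Pi.single_apply i 1 j

lemma eq_smul_e_add_smul_e (x : V2 K) : x = x 0 • e K 0 + x 1 • e K 1 := by
  funext j
  fin_cases j <;> simp [e_apply]

lemma alpha_apply (i j k : Fin 2) (x y : V2 K) : alpha K i j k x y = (x i * y j) • e K k := rfl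

lemma alpha_apply_e (i j k t l : Fin 2) :
    alpha K i j k (e K t) (e K l) = if i = t ∧ j = l then e K k else 0 := by
  simp only [alpha_apply, e_apply]
  split_ifs <;> simp_all

lemma mulW_apply (A B : W K) (x y : V2 K) :
    mulW K A B x y = A (e K 0) (B x y) - B (A (e K 0) x) y - B x (A (e K 0) y) := rfl

lemma apply_apply_eq (C : W K) (x y : V2 K) (s : Fin 2) :
    C x y s = x 0 * (y 0 * C (e K 0) (e K 0) s + y 1 * C (e K 0) (e K 1) s)
      + x 1 * (y 0 * C (e K 1) (e K 0) s + y 1 * C (e K 1) (e K 1) s) := by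
  conv_lhs => rw [eq_smul_e_add_smul_e x, eq_smul_e_add_smul_e y]
  simp [mul_add]

variable (K) in
noncomputable def alphaCoeff (i j k : Fin 2) : W K →ₗ[K] K where
  toFun A := A (e K i) (e K j) k
  map_add' _ _ := rfl
  map_smul' _ _ := rfl

lemma alphaCoeff_apply (i j k : Fin 2) (A : W K) : alphaCoeff K i j k A = A (e K i) (e K j) k :=
  rfl

lemma eq_sum_alphaCoeff_smul_alpha (A : W K) :
    A = ∑ ijk : Fin 2 × Fin 2 × Fin 2,
      alphaCoeff K ijk.1 ijk.2.1 ijk.2.2 A • alpha K ijk.1 ijk.2.1 ijk.2.2 := by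
  refine LinearMap.ext_basis (Pi.basisFun K (Fin 2)) (Pi.basisFun K (Fin 2)) fun t l => ?_
  simp only [Pi.basisFun_apply, ← e.eq_def]
  simp only [Fintype.sum_prod_type, Fin.sum_univ_two, LinearMap.add_apply, LinearMap.smul_apply,
    alpha_apply_e]
  fin_cases t <;> fin_cases l <;> funext s <;> fin_cases s <;> simp [alphaCoeff_apply, e_apply]

lemma alphaCoeff_mulW (A B : W K) :
    alphaCoeff K 0 0 1 (mulW K A B) =
      alphaCoeff K 0 0 1 A *
          (alphaCoeff K 0 0 0 B - alphaCoeff K 1 0 1 B - alphaCoeff K 0 1 1 B)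
        + (alphaCoeff K 0 1 1 A - 2 * alphaCoeff K 0 0 0 A) * alphaCoeff K 0 0 1 B := by
  simp only [alphaCoeff_apply, mulW_apply, Pi.sub_apply]
  rw [apply_apply_eq A (e K 0) (B (e K 0) (e K 0)), apply_apply_eq B (A (e K 0) (e K 0)) (e K 0),
    apply_apply_eq B (e K 0) (A (e K 0) (e K 0))]
  simp only [e_apply]
  norm_num
  ring

lemma span_seven_eq_ker_alphaCoeff :
    Submodule.span K {alpha K 0 0 0, alpha K 0 1 0, alpha K 1 0 0,
      alpha K 1 1 0, alpha K 0 1 1, alpha K 1 0 1, alpha K 1 1 1} =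
      LinearMap.ker (alphaCoeff K 0 0 1) := by
  refine le_antisymm (Submodule.span_le.2 ?_) fun A hA => ?_
  · simp [Set.insert_subset_iff, alphaCoeff_apply, alpha_apply_e, e_apply]
  · rw [eq_sum_alphaCoeff_smul_alpha A]
    refine Submodule.sum_mem _ fun ⟨i, j, k⟩ _ => ?_
    by_cases hijk : (i, j, k) = (0, 0, 1)
    · simp only [Prod.mk.injEq] at hijk
      obtain ⟨rfl, rfl, rfl⟩ := hijk
      simp [LinearMap.mem_ker.1 hA]
    · refine Submodule.smul_mem _ _ (Submodule.subset_span ?_)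
      fin_cases i <;> fin_cases j <;> fin_cases k <;> simp_all

lemma alphaCoeff_alpha_self (i j k : Fin 2) : alphaCoeff K i j k (alpha K i j k) = 1 := by
  simp [alphaCoeff_apply, alpha_apply_e, e_apply]

lemma alphaCoeff_ne_zero (i j k : Fin 2) : alphaCoeff K i j k ≠ 0 := fun h =>
  one_ne_zero ((alphaCoeff_alpha_self i j k).symm.trans (by rw [h]; rfl))

lemma finrank_W : Module.finrank K (W K) = 8 := by
  simp [Module.finrank_linearMap]

end

section

variable (K : Type*) [Field K] [CharZero K]

/-- The span of `e₁=α₁₁¹, e₂=α₁₂¹, e₃=α₂₁¹, e₄=α₂₂¹, e₆=α₁₂², e₇=α₂₁², e₈=α₂₂²`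
is closed under the multiplication of `W(2)`: it is a proper subalgebra of
codimension 1. -/
theorem span_seven_is_subalgebra_W2 :
    (∀ x ∈ Submodule.span K {alpha K 0 0 0, alpha K 0 1 0, alpha K 1 0 0,
          alpha K 1 1 0, alpha K 0 1 1, alpha K 1 0 1, alpha K 1 1 1},
      ∀ y ∈ Submodule.span K {alpha K 0 0 0, alpha K 0 1 0, alpha K 1 0 0,
          alpha K 1 1 0, alpha K 0 1 1, alpha K 1 0 1, alpha K 1 1 1},
      mulW K x y ∈ Submodule.span K {alpha K 0 0 0, alpha K 0 1 0, alpha K 1 0 0,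
          alpha K 1 1 0, alpha K 0 1 1, alpha K 1 0 1, alpha K 1 1 1}) ∧
    Module.finrank K (Submodule.span K {alpha K 0 0 0, alpha K 0 1 0, alpha K 1 0 0,
          alpha K 1 1 0, alpha K 0 1 1, alpha K 1 0 1, alpha K 1 1 1} : Submodule K (W K)) = 7 := by
  rw [span_seven_eq_ker_alphaCoeff]
  refine ⟨fun x hx y hy => ?_, ?_⟩
  · rw [LinearMap.mem_ker] at hx hy ⊢
    rw [alphaCoeff_mulW, hx, hy]
    ring
  · have h := Module.Dual.finrank_ker_add_one_of_ne_zero (alphaCoeff_ne_zero (K := K) 0 0 1)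
    rw [finrank_W] at h
    omega

end
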